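/- Let R be a po-ring and let A be a partially ordered right R-module. If R is right po-coherent and A is finitely po-presented, then A is po-coherent. -/

import Mathlib

/-!
Write every `V j` as `U (W j)` through a spanning row `U` at which `A` is finitely po-presented,
with `{X | 0 ≤ U X}` generated by the columns of `G`. Then `0 ≤ V Z` iff `W Z` lies in that cone,
so the solutions `Z ≥ 0` are the projections of the nonnegative solutions `(Z, Y)` of
`W Z - G Y = 0`. Over a right po-coherent ring, cutting a finitely generated cone in `Rᴺ` by a
half-space `{X | 0 ≤ v X}` keeps it finitely generated (apply coherence to the values of `v` on
the generators); starting from the nonnegative orthant and imposing each equation as two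
inequalities gives the nonnegative solutions, and projecting preserves finite generation.
-/

/-- A *po-ring*: a ring equipped with a partial order such that addition is
translation-invariant, multiplication by nonnegative elements (on either side) is monotone,
the ring is directed (every element is a difference of two nonnegative elements),
and `0 ≤ 1`. -/
class PORing (R : Type*) extends Ring R, PartialOrder R where
  add_le_add_right' : ∀ a b : R, a ≤ b → ∀ c : R, a + c ≤ b + c
  mul_le_mul_of_nonneg_right' : ∀ a b c : R, a ≤ b → 0 ≤ c → a * c ≤ b * c
  mul_le_mul_of_nonneg_left' : ∀ a b c : R, a ≤ b → 0 ≤ c → c * a ≤ c * b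
  directed' : ∀ x : R, ∃ y z : R, 0 ≤ y ∧ 0 ≤ z ∧ x = y - z
  zero_le_one' : (0 : R) ≤ 1

/-- A *partially ordered right module* over a po-ring `R`: an additive abelian group with a
right `R`-action `rsmul` (written on the right, so `rsmul a ξ` is `aξ`), with the usual
right-module axioms, such that addition is translation-invariant and
`0 ≤ a`, `0 ≤ ξ` imply `0 ≤ aξ`. -/
class PORightModule (R : Type*) [PORing R] (A : Type*) [AddCommGroup A] [PartialOrder A] where
  rsmul : A → R → A
  add_rsmul : ∀ (a b : A) (r : R), rsmul (a + b) r = rsmul a r + rsmul b r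
  rsmul_add : ∀ (a : A) (r s : R), rsmul a (r + s) = rsmul a r + rsmul a s
  rsmul_mul : ∀ (a : A) (r s : R), rsmul a (r * s) = rsmul (rsmul a r) s
  rsmul_one : ∀ a : A, rsmul a 1 = a
  add_le_add_right' : ∀ a b : A, a ≤ b → ∀ c : A, a + c ≤ b + c
  rsmul_nonneg : ∀ (a : A) (r : R), 0 ≤ a → 0 ≤ r → 0 ≤ rsmul a r

open PORightModule

/-- A po-ring is a partially ordered right module over itself. -/
instance PORing.toPORightModule (R : Type*) [PORing R] : PORightModule R R where
  rsmul := (· * ·)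
  add_rsmul := add_mul
  rsmul_add := mul_add
  rsmul_mul a r s := (mul_assoc a r s).symm
  rsmul_one := mul_one
  add_le_add_right' := PORing.add_le_add_right'
  rsmul_nonneg a r ha hr := by
    have h := PORing.mul_le_mul_of_nonneg_right' 0 a r ha hr
    simpa using h

/-- Products of partially ordered right modules, ordered coordinatewise. -/
instance Pi.instPORightModule {R : Type*} [PORing R] {ι : Type*} {A : ι → Type*}
    [∀ i, AddCommGroup (A i)] [∀ i, PartialOrder (A i)] [∀ i, PORightModule R (A i)] :
    PORightModule R (∀ i, A i) where
  rsmul x r i := rsmul (x i) r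
  add_rsmul a b r := funext fun i => add_rsmul (a i) (b i) r
  rsmul_add a r s := funext fun i => rsmul_add (a i) r s
  rsmul_mul a r s := funext fun i => rsmul_mul (a i) r s
  rsmul_one a := funext fun i => rsmul_one (a i)
  add_le_add_right' a b h c := by
    intro i
    exact PORightModule.add_le_add_right' R (a i) (b i) (h i) (c i)
  rsmul_nonneg a r ha hr := by
    intro i
    exact PORightModule.rsmul_nonneg (a i) r (ha i) hr

/-- Binary products of partially ordered right modules, ordered coordinatewise. -/
instance Prod.instPORightModule {R : Type*} [PORing R] {A B : Type*}
    [AddCommGroup A] [PartialOrder A] [PORightModule R A]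
    [AddCommGroup B] [PartialOrder B] [PORightModule R B] :
    PORightModule R (A × B) where
  rsmul x r := (rsmul x.1 r, rsmul x.2 r)
  add_rsmul a b r := by
    refine Prod.ext ?_ ?_ <;> simp [PORightModule.add_rsmul]
  rsmul_add a r s := by
    refine Prod.ext ?_ ?_ <;> simp [PORightModule.rsmul_add]
  rsmul_mul a r s := by
    refine Prod.ext ?_ ?_ <;> simp [PORightModule.rsmul_mul]
  rsmul_one a := by
    refine Prod.ext ?_ ?_ <;> simp [PORightModule.rsmul_one]
  add_le_add_right' a b h c := by
    rw [Prod.le_def] at h ⊢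
    constructor
    · simpa using PORightModule.add_le_add_right' R a.1 b.1 h.1 c.1
    · simpa using PORightModule.add_le_add_right' R a.2 b.2 h.2 c.2
  rsmul_nonneg a r ha hr := by
    rw [Prod.le_def] at ha ⊢
    constructor
    · simpa using PORightModule.rsmul_nonneg a.1 r (by simpa using ha.1) hr
    · simpa using PORightModule.rsmul_nonneg a.2 r (by simpa using ha.2) hr

section Defs

variable (R : Type*) [PORing R]

/-- The product `UX = a₁ξ₁ + ⋯ + aₙξₙ` of a row matrix `U = (a₁,…,aₙ)` with entries in `A`
and a column matrix `X = (ξ₁,…,ξₙ)ᵗ` with entries in `R`. -/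
def rowMul {A : Type*} [AddCommGroup A] [PartialOrder A] [PORightModule R A]
    {n : ℕ} (U : Fin n → A) (X : Fin n → R) : A :=
  ∑ i, rsmul (U i) (X i)

/-- A subset `S` of a partially ordered right `R`-module is a *finitely generated
`R⁺`-subsemimodule* if it is the set of all `R⁺`-linear combinations of some finite subset. -/
def IsFGConeIn {A : Type*} [AddCommGroup A] [PartialOrder A] [PORightModule R A]
    (S : Set A) : Prop :=
  ∃ (k : ℕ) (g : Fin k → A),
    S = { a | ∃ Y : Fin k → R, (∀ i, 0 ≤ Y i) ∧ a = rowMul R g Y }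

/-- `A` is *finitely related at* the row matrix `U ∈ M_{1,n}(A)` if the solution set of the
mixed system `UX ≥ 0, X ≥ 0` is a finitely generated `R⁺`-subsemimodule of `M_{n,1}(R)`. -/
def FinitelyRelatedAt {A : Type*} [AddCommGroup A] [PartialOrder A] [PORightModule R A]
    {n : ℕ} (U : Fin n → A) : Prop :=
  IsFGConeIn R {X : Fin n → R | 0 ≤ rowMul R U X ∧ ∀ i, 0 ≤ X i}

/-- `A` is *finitely po-presented at* the row matrix `U ∈ M_{1,n}(A)` if the solution set of
the system `UX ≥ 0` is a finitely generated `R⁺`-subsemimodule of `M_{n,1}(R)`. -/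
def FinitelyPoPresentedAt {A : Type*} [AddCommGroup A] [PartialOrder A] [PORightModule R A]
    {n : ℕ} (U : Fin n → A) : Prop :=
  IsFGConeIn R {X : Fin n → R | 0 ≤ rowMul R U X}

/-- A row matrix `U` is *spanning* if its entries generate `A` as a right `R`-module, i.e.
every element of `A` is an `R`-linear combination `UX` of the entries. -/
def SpanningRow {A : Type*} [AddCommGroup A] [PartialOrder A] [PORightModule R A]
    {n : ℕ} (U : Fin n → A) : Prop :=
  ∀ a : A, ∃ X : Fin n → R, a = rowMul R U X

variable (A : Type*) [AddCommGroup A] [PartialOrder A] [PORightModule R A]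

/-- `A` is *finitely po-presented* if it is finitely po-presented at some spanning row
matrix. -/
def FinitelyPoPresented : Prop :=
  ∃ (n : ℕ) (U : Fin n → A), SpanningRow R U ∧ FinitelyPoPresentedAt R U

/-- `A` is *finitely related* if it is a finitely generated right `R`-module and is finitely
related at every spanning row matrix. -/
def FinitelyRelatedMod : Prop :=
  (∃ (n : ℕ) (U : Fin n → A), SpanningRow R U) ∧
    ∀ (n : ℕ) (U : Fin n → A), SpanningRow R U → FinitelyRelatedAt R U

/-- `A` is *po-coherent* if it is finitely related at every row matrix of elements of `A`. -/
def PoCoherent : Prop :=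
  ∀ (n : ℕ) (U : Fin n → A), FinitelyRelatedAt R U

end Defs

/-- A po-ring is *right po-coherent* if it is po-coherent as a partially ordered right module
over itself. -/
def RightPoCoherent (R : Type*) [PORing R] : Prop :=
  PoCoherent R R


instance PORing.toIsOrderedAddMonoid (R : Type*) [PORing R] : IsOrderedAddMonoid R where
  add_le_add_left := PORing.add_le_add_right'

namespace PORightModule

variable {R : Type*} [PORing R] {A : Type*} [AddCommGroup A] [PartialOrder A] [PORightModule R A]

def rsmulRight (r : R) : A →+ A :=
  AddMonoidHom.mk' (rsmul · r) (fun a b => add_rsmul a b r)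

def rsmulLeft (a : A) : R →+ A :=
  AddMonoidHom.mk' (rsmul a) (rsmul_add a)

theorem neg_rsmul (a : A) (r : R) : rsmul (-a) r = -rsmul a r :=
  map_neg (rsmulRight r) a

theorem sum_rsmul {ι : Type*} (s : Finset ι) (f : ι → A) (r : R) :
    rsmul (∑ i ∈ s, f i) r = ∑ i ∈ s, rsmul (f i) r :=
  map_sum (rsmulRight r) f s

theorem rsmul_sum {ι : Type*} (s : Finset ι) (a : A) (f : ι → R) :
    rsmul a (∑ i ∈ s, f i) = ∑ i ∈ s, rsmul a (f i) :=
  map_sum (rsmulLeft a) f s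

end PORightModule

section RowMul

variable {R : Type*} [PORing R] {A : Type*} [AddCommGroup A] [PartialOrder A] [PORightModule R A]

theorem rowMul_apply {ι : Type*} {B : ι → Type*} [∀ i, AddCommGroup (B i)]
    [∀ i, PartialOrder (B i)] [∀ i, PORightModule R (B i)] {q : ℕ}
    (H : Fin q → ∀ i, B i) (Y : Fin q → R) (p : ι) :
    rowMul R H Y p = rowMul R (fun j => H j p) Y := by
  simp only [rowMul, Finset.sum_apply]
  rfl

theorem rowMul_rowMul {n m : ℕ} (U : Fin n → A) (W : Fin m → Fin n → R) (Z : Fin m → R) :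
    rowMul R (fun j => rowMul R U (W j)) Z = rowMul R U (rowMul R W Z) := by
  simp only [rowMul, sum_rsmul, ← rsmul_mul, Finset.sum_apply, rsmul_sum]
  exact Finset.sum_comm

theorem rowMul_append {m k : ℕ} (a : Fin m → A) (b : Fin k → A) (X : Fin (m + k) → R) :
    rowMul R (Fin.append a b) X
      = rowMul R a (fun j => X (Fin.castAdd k j)) + rowMul R b (fun i => X (Fin.natAdd m i)) := by
  simp [rowMul, Fin.sum_univ_add]

theorem rowMul_neg {n : ℕ} (a : Fin n → A) (X : Fin n → R) :
    rowMul R (-a) X = -rowMul R a X := by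
  simp [rowMul, neg_rsmul]

end RowMul

namespace IsFGConeIn

variable {R : Type*} [PORing R]

theorem image_comp {N M : ℕ} {S : Set (Fin N → R)} (hS : IsFGConeIn R S) (e : Fin M → Fin N) :
    IsFGConeIn R ((· ∘ e) '' S) := by
  obtain ⟨k, g, rfl⟩ := hS
  have rowMul_comp : ∀ Y : Fin k → R, rowMul R g Y ∘ e = rowMul R (fun i => g i ∘ e) Y := by
    intro Y
    ext p
    simp [rowMul_apply]
  refine ⟨k, fun i => g i ∘ e, ?_⟩
  ext Z
  simp only [Set.mem_image, Set.mem_ofPred_eq]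
  constructor
  · rintro ⟨_, ⟨Y, hY, rfl⟩, rfl⟩
    exact ⟨Y, hY, rowMul_comp Y⟩
  · rintro ⟨Y, hY, rfl⟩
    exact ⟨_, ⟨Y, hY, rfl⟩, rowMul_comp Y⟩

theorem inter_nonneg_rowMul (hR : RightPoCoherent R) {N : ℕ} {S : Set (Fin N → R)}
    (hS : IsFGConeIn R S) (V : Fin N → R) :
    IsFGConeIn R (S ∩ {X | 0 ≤ rowMul R V X}) := by
  obtain ⟨k, G, rfl⟩ := hS
  obtain ⟨l, H, hH⟩ := hR k (fun i => rowMul R V (G i))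
  have mem_H : ∀ Y : Fin k → R, (0 ≤ rowMul R V (rowMul R G Y) ∧ ∀ i, 0 ≤ Y i) ↔
      ∃ T : Fin l → R, (∀ s, 0 ≤ T s) ∧ Y = rowMul R H T := fun Y => by
    simpa only [Set.mem_ofPred_eq, rowMul_rowMul] using Set.ext_iff.1 hH Y
  refine ⟨l, fun s => rowMul R G (H s), ?_⟩
  ext X
  simp only [Set.mem_inter_iff, Set.mem_ofPred_eq]
  constructor
  · rintro ⟨⟨Y, hY, rfl⟩, hVX⟩
    obtain ⟨T, hT, rfl⟩ := (mem_H Y).1 ⟨hVX, hY⟩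
    exact ⟨T, hT, (rowMul_rowMul G H T).symm⟩
  · rintro ⟨T, hT, rfl⟩
    obtain ⟨hVX, hY⟩ := (mem_H (rowMul R H T)).2 ⟨T, hT, rfl⟩
    rw [rowMul_rowMul]
    exact ⟨⟨_, hY, rfl⟩, hVX⟩

theorem inter_rowMul_eq_zero (hR : RightPoCoherent R) {N : ℕ} {S : Set (Fin N → R)}
    (hS : IsFGConeIn R S) (V : Fin N → R) :
    IsFGConeIn R (S ∩ {X | rowMul R V X = 0}) := by
  convert (hS.inter_nonneg_rowMul hR V).inter_nonneg_rowMul hR (-V) using 1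
  ext X
  simp only [Set.mem_inter_iff, Set.mem_ofPred_eq, rowMul_neg, neg_nonneg, and_assoc]
  exact and_congr_right fun _ => le_antisymm_iff.trans and_comm

end IsFGConeIn

section Solutions

variable {R : Type*} [PORing R]

theorem isFGConeIn_nonneg (N : ℕ) : IsFGConeIn R {X : Fin N → R | ∀ i, 0 ≤ X i} := by
  have rowMul_single : ∀ X : Fin N → R, rowMul R (fun i => Pi.single i 1) X = X := by
    intro X
    ext p
    simp [rowMul, rsmul, Pi.single_apply]
  refine ⟨N, fun i => Pi.single i 1, ?_⟩
  ext X
  simp only [Set.mem_ofPred_eq, rowMul_single]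
  exact ⟨fun hX => ⟨X, hX, rfl⟩, by rintro ⟨Y, hY, rfl⟩; exact hY⟩

theorem isFGConeIn_nonneg_ker (hR : RightPoCoherent R) {N n : ℕ} (M : Fin N → Fin n → R) :
    IsFGConeIn R {X : Fin N → R | (∀ i, 0 ≤ X i) ∧ rowMul R M X = 0} := by
  have cut : ∀ s : Finset (Fin n), IsFGConeIn R
      {X : Fin N → R | (∀ i, 0 ≤ X i) ∧ ∀ t ∈ s, rowMul R (fun i => M i t) X = 0} := by
    intro s
    induction s using Finset.induction_on with
    | empty => simpa using isFGConeIn_nonneg N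
    | insert t s _ ih =>
      convert ih.inter_rowMul_eq_zero hR (fun i => M i t) using 1
      ext X
      simp only [Finset.mem_insert, forall_eq_or_imp, Set.mem_inter_iff, Set.mem_ofPred_eq]
      tauto
  simpa [funext_iff, rowMul_apply] using cut Finset.univ

theorem isFGConeIn_nonneg_preimage_cone (hR : RightPoCoherent R) {m n k : ℕ}
    (W : Fin m → Fin n → R) (G : Fin k → Fin n → R) :
    IsFGConeIn R {Z : Fin m → R | (∀ j, 0 ≤ Z j) ∧
      ∃ Y : Fin k → R, (∀ i, 0 ≤ Y i) ∧ rowMul R W Z = rowMul R G Y} := by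
  convert (isFGConeIn_nonneg_ker hR (Fin.append W (-G))).image_comp (Fin.castAdd k) using 1
  ext Z
  simp only [Set.mem_image, Set.mem_ofPred_eq, rowMul_append, rowMul_neg, ← sub_eq_add_neg,
    sub_eq_zero, Fin.forall_fin_add]
  constructor
  · rintro ⟨hZ, Y, hY, hWG⟩
    exact ⟨Fin.append Z Y, by simpa using ⟨⟨hZ, hY⟩, hWG⟩, by ext; simp⟩
  · rintro ⟨X, ⟨⟨hZ, hY⟩, hWG⟩, rfl⟩
    exact ⟨hZ, _, hY, hWG⟩

end Solutions

/-- Let `R` be a po-ring and `A` a partially ordered right `R`-module.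
If `R` is right po-coherent and `A` is finitely po-presented, then `A` is po-coherent. -/
theorem poCoherent_of_finitelyPoPresented
    (R A : Type*) [PORing R] [AddCommGroup A] [PartialOrder A] [PORightModule R A]
    (hR : RightPoCoherent R) (hA : FinitelyPoPresented R A) :
    PoCoherent R A := by
  obtain ⟨n, U, hU, k, G, hG⟩ := hA
  intro m V
  choose W hW using fun j => hU (V j)
  have rowMul_V : ∀ Z, rowMul R V Z = rowMul R U (rowMul R W Z) := fun Z => by
    rw [← rowMul_rowMul, ← funext hW]
  rw [FinitelyRelatedAt]
  convert isFGConeIn_nonneg_preimage_cone hR W G using 2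
  ext Z
  rw [rowMul_V, and_comm]
  exact and_congr_right fun _ => by simpa only [Set.mem_ofPred_eq] using Set.ext_iff.1 hG _
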